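/- arXiv:1509.03098 — 2 statements merged into one kernel-verified Lean document; each statement's English description precedes it below -/
import Mathlib

section
/- Fix an integer p ≥ 3 and N ≥ 2, and let K(x,y) = ( ⟨x,y⟩ + √(1−‖x‖²)·√(1−‖y‖²) )^p for x, y in the open unit ball of ℝ^{N−1}. Write W(x,0) = √(1−‖x‖²). Then for all x in the open unit ball and all indices 1 ≤ i, j, k, l ≤ N−1: (i) ∂K/∂y_i(x,0) = p·W(x,0)^{p−1}·x_i; (ii) ∂²K/∂y_i∂y_j(x,0) = −δ_{ij}·p·W(x,0)^p + p(p−1)·W(x,0)^{p−2}·x_i x_j; (iii) ∂²K/∂x_i∂y_j(0,0) = δ_{ij}·p; (iv) ∂³K/∂x_i∂x_j∂y_k(0,0) = 0; (v) ∂⁴K/∂x_i∂x_j∂y_k∂y_l(0,0) = p(p−1)·[δ_{ij}δ_{kl} + δ_{il}δ_{jk} + δ_{ik}δ_{jl}] + p·δ_{ij}δ_{kl}. (These are the covariances, at the origin, between the field, its gradient, and its Hessian, for a centered Gaussian field with covariance kernel K.) -/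
open MeasureTheory ProbabilityTheory Filter Topology Asymptotics
open scoped NNReal ENNReal

noncomputable section

namespace PSpin

/-- The sphere of radius `√N` in `ℝ^N`. -/
def sphereN (N : ℕ) : Set (EuclideanSpace ℝ (Fin N)) :=
  {σ | ‖σ‖ = Real.sqrt N}

/-- The pure `p`-spin Hamiltonian with disorder coefficients `J`. -/
def hamiltonian (p N : ℕ) (J : (Fin p → Fin N) → ℝ) (σ : EuclideanSpace ℝ (Fin N)) : ℝ :=
  ((N : ℝ) ^ (((p : ℝ) - 1) / 2))⁻¹ * ∑ i : Fin p → Fin N, J i * ∏ k : Fin p, σ (i k)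

/-- `σ` is a critical point of the restriction of `f` to the sphere of radius `√N`:
it lies on the sphere and the differential of `f` at `σ` vanishes on the tangent
space of the sphere at `σ`. -/
def IsCritical {N : ℕ} (f : EuclideanSpace ℝ (Fin N) → ℝ)
    (σ : EuclideanSpace ℝ (Fin N)) : Prop :=
  σ ∈ sphereN N ∧
    ∀ v : EuclideanSpace ℝ (Fin N), (inner ℝ v σ : ℝ) = 0 → fderiv ℝ f σ v = 0

/-- The semicircle measure. -/
def semicircle : Measure ℝ :=
  volume.withDensity fun x =>
    ENNReal.ofReal (if |x| ≤ 2 then Real.sqrt (4 - x ^ 2) / (2 * Real.pi) else 0)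

/-- `Ω(x) = ∫ log |λ - x| dμ*(λ)` for the semicircle measure `μ*`. -/
def OmegaFn (x : ℝ) : ℝ := ∫ lam, Real.log |lam - x| ∂semicircle

def gammaP (p : ℕ) : ℝ := Real.sqrt ((p : ℝ) / ((p : ℝ) - 1))

def Einfty (p : ℕ) : ℝ := 2 * Real.sqrt (((p : ℝ) - 1) / (p : ℝ))

/-- The exponential growth rate `Θ_p`. -/
def Theta (p : ℕ) (u : ℝ) : ℝ :=
  if u < 0 then
    1 / 2 + Real.log ((p : ℝ) - 1) / 2 - u ^ 2 / 2 + OmegaFn (gammaP p * u)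
  else Real.log ((p : ℝ) - 1) / 2

def iotaP (p : ℕ) : ℝ := (1 + (-1 : ℝ) ^ p) / 2

def htilde (x : ℝ) : ℝ :=
  |(x - 1) / (x + 1)| ^ ((1 : ℝ) / 4) + |(x + 1) / (x - 1)| ^ ((1 : ℝ) / 4)

def K0 (p : ℕ) (E0 cp : ℝ) : ℝ :=
  E0 / 2 -
    Real.log ((1 + iotaP p) * htilde (-(gammaP p * E0) / 2) / (2 * Real.sqrt (2 * Real.pi))) / cp

/-- The centering sequence `m_N`. -/
def mSeq (p : ℕ) (E0 cp : ℝ) (N : ℕ) : ℝ :=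
  -E0 * N + Real.log N / (2 * cp) - K0 p E0 cp

/-- The constant `C_0 = (γ_p/2) ∫ (γ_p E_0 - x)⁻¹ dμ*(x)`. -/
def C0 (p : ℕ) (E0 : ℝ) : ℝ := gammaP p / 2 * ∫ x, (gammaP p * E0 - x)⁻¹ ∂semicircle

/-- The extremal point process of critical points, evaluated on a set `B ⊆ ℝ`. -/
def xi (p N : ℕ) (J : (Fin p → Fin N) → ℝ) (m : ℝ) (B : Set ℝ) : ℝ :=
  (1 + iotaP p)⁻¹ *
    (Nat.card {σ : EuclideanSpace ℝ (Fin N) //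
      IsCritical (hamiltonian p N J) σ ∧ hamiltonian p N J σ - m ∈ B} : ℝ)

/-- The perturbed Hamiltonian `H_N^+ = H_N + N^{-1/2} H_N'`. -/
def hamPlus (p N : ℕ) (J J' : (Fin p → Fin N) → ℝ) (σ : EuclideanSpace ℝ (Fin N)) : ℝ :=
  hamiltonian p N J σ + (Real.sqrt N)⁻¹ * hamiltonian p N J' σ

/-- The overlap `R(σ, σ') = ⟨σ, σ'⟩ / N`. -/
def overlap {N : ℕ} (σ σ' : EuclideanSpace ℝ (Fin N)) : ℝ := (inner ℝ σ σ' : ℝ) / N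

/-- Membership in `𝒞_N(L)`: a critical point of `H_N` with value within `L` of `m`. -/
def critNear (p N : ℕ) (J : (Fin p → Fin N) → ℝ) (m L : ℝ)
    (σ : EuclideanSpace ℝ (Fin N)) : Prop :=
  IsCritical (hamiltonian p N J) σ ∧ |hamiltonian p N J σ - m| ≤ L

/-- Membership in `𝒞_N^+(L)`. -/
def critNearPlus (p N : ℕ) (J J' : (Fin p → Fin N) → ℝ) (m L : ℝ)
    (σ : EuclideanSpace ℝ (Fin N)) : Prop :=
  IsCritical (hamPlus p N J J') σ ∧ |hamPlus p N J J' σ - m| ≤ L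

/-- The disorder coefficients are i.i.d. standard Gaussian random variables. -/
def IsStdGaussian {Ω : Type*} [MeasurableSpace Ω] (P : Measure Ω) (p N : ℕ)
    (J : Ω → (Fin p → Fin N) → ℝ) : Prop :=
  Measure.map J P = Measure.pi fun _ : Fin p → Fin N => gaussianReal 0 1

/-- `W(x, y) = ⟨x, y⟩ + √(1 - ‖x‖²) √(1 - ‖y‖²)`. -/
def Wfun {n : ℕ} (x y : EuclideanSpace ℝ (Fin n)) : ℝ :=
  (inner ℝ x y : ℝ) + Real.sqrt (1 - ‖x‖ ^ 2) * Real.sqrt (1 - ‖y‖ ^ 2)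

/-- The squared canonical-metric distance of the error field `f⁽¹⁾`. -/
def phi1sq (p : ℕ) {n : ℕ} (x y : EuclideanSpace ℝ (Fin n)) : ℝ :=
  2 - 2 * Wfun x y ^ p + p * ‖x - y‖ ^ 2
    + 2 * p * (1 - ‖x‖ ^ 2) ^ (((p : ℝ) - 1) / 2) * (inner ℝ x (y - x) : ℝ)
    - 2 * p * (1 - ‖y‖ ^ 2) ^ (((p : ℝ) - 1) / 2) * (inner ℝ y (y - x) : ℝ)

/-- The covariance kernel `K(x,y) = W(x,y)^p`. -/
def Kcov (p : ℕ) {n : ℕ} (x y : EuclideanSpace ℝ (Fin n)) : ℝ := Wfun x y ^ p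

end PSpin

open PSpin
open scoped RealInnerProductSpace

/-!
Write `h(y) = √(1 - ‖y‖²)`, so that `W(x, y) = ⟪x, y⟫ + h(x) h(y)` is symmetric and `K = W ^ p`.
Along a curve `dh = -⟪y, dy⟫ / h(y)`, hence `∂_v W(x, y) = ⟪v, y⟫ - h(y) ⟪x, v⟫ / h(x)`. At `x = 0`,
where `W(0, y) = h(y)`, this gives `∂_v K(0, y) = p h(y)^(p-1) ⟪v, y⟫` and
`∂²K/∂xᵢ∂xⱼ (0, y) = p (p - 1) h(y)^(p-2) yᵢ yⱼ - p h(y)^p δᵢⱼ`.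
All five identities are derivatives of these two functions of `y` at `y = 0`, where only `h(0) = 1`
and the quadratic vanishing of `1 - h²` matter. Each nested `deriv` differentiates the inner one at
nearby base points, so every layer is computed on a neighbourhood of the origin, not just at it.
-/

section

variable {E : Type*} [NormedAddCommGroup E] [InnerProductSpace ℝ E]
  {α : ℝ → E} {α' : E} {t : ℝ}

theorem HasDerivAt.sqrt_one_sub_norm_sq (hα : HasDerivAt α α' t) (h1 : ‖α t‖ < 1) :
    HasDerivAt (fun t => √(1 - ‖α t‖ ^ 2)) (-⟪α t, α'⟫ / √(1 - ‖α t‖ ^ 2)) t := by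
  have hpos : 0 < 1 - ‖α t‖ ^ 2 := by nlinarith [norm_nonneg (α t)]
  refine (((hasDerivAt_const t 1).fun_sub hα.norm_sq).sqrt hpos.ne').congr_deriv ?_
  field_simp
  ring

/-- Stated without `m - 1`, so that it also holds for `m = 0`. -/
theorem HasDerivAt.sqrt_one_sub_norm_sq_pow (hα : HasDerivAt α α' t) (h1 : ‖α t‖ < 1) (m : ℕ) :
    HasDerivAt (fun t => √(1 - ‖α t‖ ^ 2) ^ m)
      (-(m * √(1 - ‖α t‖ ^ 2) ^ m * ⟪α t, α'⟫ / (1 - ‖α t‖ ^ 2))) t := by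
  have hpos : 0 < 1 - ‖α t‖ ^ 2 := by nlinarith [norm_nonneg (α t)]
  have hsq : √(1 - ‖α t‖ ^ 2) ^ 2 = 1 - ‖α t‖ ^ 2 := Real.sq_sqrt hpos.le
  refine ((hα.sqrt_one_sub_norm_sq h1).fun_pow m).congr_deriv ?_
  rcases m with _ | m
  · simp
  · field_simp
    rw [Nat.add_sub_cancel]
    linear_combination √(1 - ‖α t‖ ^ 2) ^ m * ⟪α t, α'⟫ * hsq

end

theorem deriv_deriv_of_eventually_hasDerivAt {F : ℝ → ℝ → ℝ} {g : ℝ → ℝ} {a b g' : ℝ}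
    (hF : ∀ᶠ s in 𝓝 a, HasDerivAt (F s) (g s) b) (hg : HasDerivAt g g' a) :
    deriv (fun s => deriv (F s) b) a = g' := by
  rw [Filter.EventuallyEq.deriv_eq (hF.mono fun s hs => hs.deriv), hg.deriv]

theorem hasDerivAt_mul_of_continuousAt {G : ℝ → ℝ} (hG : ContinuousAt G 0) :
    HasDerivAt (fun u => u * G u) (G 0) 0 := by
  rw [hasDerivAt_iff_tendsto_slope]
  refine (hG.tendsto.mono_left nhdsWithin_le_nhds).congr' ?_
  filter_upwards [self_mem_nhdsWithin] with u hu
  have hu : u ≠ 0 := hu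
  simp [slope_def_field, hu]

@[simp]
theorem EuclideanSpace.single_zero {n : ℕ} (i : Fin n) : EuclideanSpace.single i (0 : ℝ) = 0 := by
  simp

namespace PSpin

variable {n : ℕ}

theorem single_apply_eq_mul_ite (i j : Fin n) (t : ℝ) :
    EuclideanSpace.single j t i = t * if i = j then 1 else 0 := by
  simp [PiLp.single_apply]

theorem inner_single_one_left (i : Fin n) (y : EuclideanSpace ℝ (Fin n)) :
    ⟪EuclideanSpace.single i 1, y⟫ = y i := by
  simp [EuclideanSpace.inner_single_left]

theorem inner_single_one_right (i : Fin n) (y : EuclideanSpace ℝ (Fin n)) :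
    ⟪y, EuclideanSpace.single i 1⟫ = y i := by
  simp [EuclideanSpace.inner_single_right]

theorem hasDerivAt_single (i : Fin n) (t : ℝ) :
    HasDerivAt (fun t => EuclideanSpace.single i t) (EuclideanSpace.single i 1) t := by
  have : (fun t : ℝ => EuclideanSpace.single i t) = fun t => t • EuclideanSpace.single i 1 := by
    ext t j
    simp [PiLp.single_apply]
  rw [this]
  simpa using (hasDerivAt_id t).smul_const (EuclideanSpace.single i (1 : ℝ))

theorem _root_.HasDerivAt.euclideanSpace_apply {β : ℝ → EuclideanSpace ℝ (Fin n)}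
    {z : EuclideanSpace ℝ (Fin n)} {u : ℝ} (hβ : HasDerivAt β z u) (i : Fin n) :
    HasDerivAt (fun u => β u i) (z i) u := by
  simpa [inner_single_one_left] using
    (hasDerivAt_const u (EuclideanSpace.single i (1 : ℝ))).inner ℝ hβ

theorem eventually_norm_single_lt_one (i : Fin n) :
    ∀ᶠ s in 𝓝 (0 : ℝ), ‖EuclideanSpace.single i s‖ < 1 := by
  simpa using (hasDerivAt_single i (0 : ℝ)).continuousAt.norm.eventually_lt continuousAt_const
    (by simp)

theorem Wfun_comm (x y : EuclideanSpace ℝ (Fin n)) : Wfun x y = Wfun y x := by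
  rw [Wfun, Wfun, real_inner_comm, mul_comm]

theorem Kcov_comm (p : ℕ) (x y : EuclideanSpace ℝ (Fin n)) : Kcov p x y = Kcov p y x := by
  rw [Kcov, Kcov, Wfun_comm]

theorem Wfun_zero_left (y : EuclideanSpace ℝ (Fin n)) : Wfun 0 y = √(1 - ‖y‖ ^ 2) := by
  simp [Wfun]

section

variable {α : ℝ → EuclideanSpace ℝ (Fin n)} {α' : EuclideanSpace ℝ (Fin n)} {t : ℝ}

theorem _root_.HasDerivAt.wfun_left (hα : HasDerivAt α α' t) (h1 : ‖α t‖ < 1)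
    (y : EuclideanSpace ℝ (Fin n)) :
    HasDerivAt (fun t => Wfun (α t) y)
      (⟪α', y⟫ - √(1 - ‖y‖ ^ 2) * ⟪α t, α'⟫ / √(1 - ‖α t‖ ^ 2)) t := by
  refine ((hα.inner ℝ (hasDerivAt_const t y)).fun_add
    ((hα.sqrt_one_sub_norm_sq h1).mul_const (√(1 - ‖y‖ ^ 2)))).congr_deriv ?_
  simp only [inner_zero_right]
  ring

theorem _root_.HasDerivAt.kcov_left (hα : HasDerivAt α α' t) (h1 : ‖α t‖ < 1) (p : ℕ)
    (y : EuclideanSpace ℝ (Fin n)) :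
    HasDerivAt (fun t => Kcov p (α t) y) (p * Wfun (α t) y ^ (p - 1) *
      (⟪α', y⟫ - √(1 - ‖y‖ ^ 2) * ⟪α t, α'⟫ / √(1 - ‖α t‖ ^ 2))) t :=
  (hα.wfun_left h1 y).fun_pow p

end

theorem hasDerivAt_kcov_single_left (p : ℕ) (i : Fin n) (y : EuclideanSpace ℝ (Fin n)) :
    HasDerivAt (fun t => Kcov p (EuclideanSpace.single i t) y)
      (p * √(1 - ‖y‖ ^ 2) ^ (p - 1) * y i) 0 := by
  simpa [Wfun_zero_left, inner_single_one_left] using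
    (hasDerivAt_single i (0 : ℝ)).kcov_left (by simp) p y

theorem deriv_kcov_single_right (p : ℕ) (x : EuclideanSpace ℝ (Fin n)) (i : Fin n) :
    deriv (fun t => Kcov p x (EuclideanSpace.single i t)) 0
      = p * √(1 - ‖x‖ ^ 2) ^ (p - 1) * x i := by
  simp_rw [Kcov_comm p x]
  exact (hasDerivAt_kcov_single_left p i x).deriv

theorem deriv_deriv_kcov_single_single (p : ℕ) (i j : Fin n) :
    deriv (fun s => deriv (fun t =>
        Kcov p (EuclideanSpace.single i s) (EuclideanSpace.single j t) : ℝ → ℝ) 0) 0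
      = (if i = j then (1 : ℝ) else 0) * p := by
  simp_rw [Kcov_comm p (EuclideanSpace.single i _), (hasDerivAt_kcov_single_left p j _).deriv]
  have hα := hasDerivAt_single i (0 : ℝ)
  refine ((hα.sqrt_one_sub_norm_sq_pow (by simp) (p - 1)).const_mul (p : ℝ)).fun_mul
    (hα.euclideanSpace_apply j) |>.deriv.trans ?_
  simp [PiLp.single_apply, eq_comm (a := j)]

/-- `∂²K/∂xᵢ∂xⱼ (0, y)`. -/
def kcovHessLeftZero (p : ℕ) (i j : Fin n) (y : EuclideanSpace ℝ (Fin n)) : ℝ :=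
  p * (p - 1) * (√(1 - ‖y‖ ^ 2) ^ (p - 2) * (y i * y j))
    - p * √(1 - ‖y‖ ^ 2) ^ p * (if i = j then 1 else 0)

def kcovHessLeftZeroDeriv (p : ℕ) (i j : Fin n) (y z : EuclideanSpace ℝ (Fin n)) : ℝ :=
  p * (p - 1) * (√(1 - ‖y‖ ^ 2) ^ (p - 2) * (z i * y j + y i * z j)
      - (p - 2 : ℕ) * √(1 - ‖y‖ ^ 2) ^ (p - 2) * ⟪y, z⟫ / (1 - ‖y‖ ^ 2) * (y i * y j))
    + p ^ 2 * √(1 - ‖y‖ ^ 2) ^ p * ⟪y, z⟫ / (1 - ‖y‖ ^ 2) * (if i = j then 1 else 0)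

theorem deriv_deriv_kcov_single_add_single (p : ℕ) (i j : Fin n) (y : EuclideanSpace ℝ (Fin n)) :
    deriv (fun s => deriv (fun t =>
      Kcov p (EuclideanSpace.single i s + EuclideanSpace.single j t) y) 0) 0
      = kcovHessLeftZero p i j y := by
  refine deriv_deriv_of_eventually_hasDerivAt (g := fun s =>
    p * Wfun (EuclideanSpace.single i s) y ^ (p - 1) * (⟪EuclideanSpace.single j 1, y⟫
      - √(1 - ‖y‖ ^ 2) * (⟪EuclideanSpace.single i s, EuclideanSpace.single j 1⟫
        / √(1 - ‖EuclideanSpace.single i s‖ ^ 2)))) ?_ ?_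
  · filter_upwards [eventually_norm_single_lt_one i] with s hs
    simpa [mul_div_assoc] using
      ((hasDerivAt_single j (0 : ℝ)).const_add (EuclideanSpace.single i s)).kcov_left
        (by simpa using hs) p y
  · have hα := hasDerivAt_single i (0 : ℝ)
    have hW := (hα.wfun_left (by simp) y).fun_pow (p - 1)
    have hq := (hα.inner ℝ (hasDerivAt_const 0 (EuclideanSpace.single j (1 : ℝ)))).fun_div
      (hα.sqrt_one_sub_norm_sq (by simp)) (by simp)
    refine ((hW.const_mul (p : ℝ)).fun_mul
      ((hq.const_mul (√(1 - ‖y‖ ^ 2))).const_sub _)).congr_deriv ?_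
    have hij : ⟪EuclideanSpace.single i (1 : ℝ), EuclideanSpace.single j 1⟫
        = if i = j then 1 else 0 := by
      simp [inner_single_one_left, PiLp.single_apply]
    simp only [EuclideanSpace.single_zero, Wfun_zero_left, inner_single_one_left, hij,
      inner_zero_left, inner_zero_right, norm_zero, zero_pow two_ne_zero, sub_zero, Real.sqrt_one,
      div_one, mul_zero, zero_mul, zero_add, one_pow, mul_one, kcovHessLeftZero]
    rcases p with _ | p
    · simp
    · rw [show p + 1 - 2 = p - 1 by omega]
      simp only [Nat.add_sub_cancel, Nat.cast_add, Nat.cast_one]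
      ring

theorem _root_.HasDerivAt.kcovHessLeftZero {β : ℝ → EuclideanSpace ℝ (Fin n)}
    {z : EuclideanSpace ℝ (Fin n)} {u : ℝ} (hβ : HasDerivAt β z u) (h1 : ‖β u‖ < 1)
    (p : ℕ) (i j : Fin n) :
    HasDerivAt (fun u => kcovHessLeftZero p i j (β u))
      (kcovHessLeftZeroDeriv p i j (β u) z) u := by
  have hA := (hβ.sqrt_one_sub_norm_sq_pow h1 (p - 2)).fun_mul
    ((hβ.euclideanSpace_apply i).fun_mul (hβ.euclideanSpace_apply j))
  have hB := hβ.sqrt_one_sub_norm_sq_pow h1 p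
  unfold PSpin.kcovHessLeftZero
  refine ((hA.const_mul ((p : ℝ) * (p - 1))).fun_sub
    ((hB.const_mul (p : ℝ)).mul_const (if i = j then (1 : ℝ) else 0))).congr_deriv ?_
  simp only [kcovHessLeftZeroDeriv]
  ring

theorem deriv_deriv_kcov_right_single_add_single (p : ℕ) (x : EuclideanSpace ℝ (Fin n))
    (i j : Fin n) :
    deriv (fun s => deriv (fun t =>
        Kcov p x (EuclideanSpace.single i t + EuclideanSpace.single j s)) 0) 0
      = -(if i = j then (1 : ℝ) else 0) * p * √(1 - ‖x‖ ^ 2) ^ p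
        + p * ((p : ℝ) - 1) * √(1 - ‖x‖ ^ 2) ^ (p - 2) * (x i * x j) := by
  simp_rw [Kcov_comm p x, add_comm (EuclideanSpace.single i _)]
  rw [deriv_deriv_kcov_single_add_single, kcovHessLeftZero]
  simp only [eq_comm (a := j)]
  ring

theorem deriv_kcovHessLeftZero_single (p : ℕ) (i j k : Fin n) :
    deriv (fun u => kcovHessLeftZero p i j (EuclideanSpace.single k u)) 0 = 0 := by
  rw [((hasDerivAt_single k (0 : ℝ)).kcovHessLeftZero (by simp) p i j).deriv]
  simp [kcovHessLeftZeroDeriv]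

theorem deriv_deriv_kcovHessLeftZero_single_add_single (p : ℕ) (i j k l : Fin n) :
    deriv (fun u' => deriv (fun u =>
        kcovHessLeftZero p i j (EuclideanSpace.single k u + EuclideanSpace.single l u')) 0) 0
      = p * ((p : ℝ) - 1) *
            ((if i = j then (1 : ℝ) else 0) * (if k = l then (1 : ℝ) else 0)
              + (if i = l then (1 : ℝ) else 0) * (if j = k then (1 : ℝ) else 0)
              + (if i = k then (1 : ℝ) else 0) * (if j = l then (1 : ℝ) else 0))
          + p * (if i = j then (1 : ℝ) else 0) * (if k = l then (1 : ℝ) else 0) := by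
  refine deriv_deriv_of_eventually_hasDerivAt (g := fun u' =>
    kcovHessLeftZeroDeriv p i j (EuclideanSpace.single l u') (EuclideanSpace.single k 1)) ?_ ?_
  · filter_upwards [eventually_norm_single_lt_one l] with u' hu'
    simpa using ((hasDerivAt_single k (0 : ℝ)).add_const
      (EuclideanSpace.single l u')).kcovHessLeftZero (by simpa using hu') p i j
  -- Along `single l` this derivative vanishes to first order in `u'`: it is `u' * G u'` with `G`
  -- continuous, so its derivative at `0` is `G 0`.
  · set G : ℝ → ℝ := fun u' => p * (p - 1) * (√(1 - u' ^ 2) ^ (p - 2) *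
          ((if i = k then 1 else 0) * (if j = l then 1 else 0)
            + (if i = l then 1 else 0) * (if j = k then 1 else 0))
        - (p - 2 : ℕ) * √(1 - u' ^ 2) ^ (p - 2) * (if k = l then 1 else 0) / (1 - u' ^ 2)
          * (u' ^ 2 * (if i = l then 1 else 0) * (if j = l then 1 else 0)))
      + p ^ 2 * √(1 - u' ^ 2) ^ p * (if k = l then 1 else 0) / (1 - u' ^ 2)
        * (if i = j then 1 else 0) with hG
    have hD : (fun u' => kcovHessLeftZeroDeriv p i j (EuclideanSpace.single l u')
        (EuclideanSpace.single k 1)) = fun u' => u' * G u' := by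
      ext u'
      simp only [kcovHessLeftZeroDeriv, single_apply_eq_mul_ite, inner_single_one_right,
        PiLp.norm_single, Real.norm_eq_abs, sq_abs, hG]
      ring
    have hGc : ContinuousAt G 0 := by
      rw [hG]
      fun_prop (disch := norm_num)
    rw [hD]
    refine (hasDerivAt_mul_of_continuousAt hGc).congr_deriv ?_
    simp only [hG, zero_pow two_ne_zero, sub_zero, Real.sqrt_one, one_pow, one_mul, mul_zero,
      zero_mul, div_one]
    ring

end PSpin

theorem kernel_derivatives_general (p N : ℕ) (x : EuclideanSpace ℝ (Fin (N - 1)))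
    (i j k l : Fin (N - 1)) :
    deriv (fun t => Kcov p x (EuclideanSpace.single i t)) 0
        = p * Real.sqrt (1 - ‖x‖ ^ 2) ^ (p - 1) * x i ∧
    deriv (fun s => deriv (fun t =>
        Kcov p x (EuclideanSpace.single i t + EuclideanSpace.single j s)) 0) 0
        = -(if i = j then (1 : ℝ) else 0) * p * Real.sqrt (1 - ‖x‖ ^ 2) ^ p
          + p * ((p : ℝ) - 1) * Real.sqrt (1 - ‖x‖ ^ 2) ^ (p - 2) * (x i * x j) ∧
    deriv (fun s => deriv (fun t =>
        Kcov p (EuclideanSpace.single i s) (EuclideanSpace.single j t)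
          : ℝ → ℝ) 0) 0
        = (if i = j then (1 : ℝ) else 0) * p ∧
    deriv (fun u => deriv (fun s => deriv (fun t =>
        Kcov p (EuclideanSpace.single i s + EuclideanSpace.single j t)
          (EuclideanSpace.single k u)) 0) 0) 0 = 0 ∧
    deriv (fun u' => deriv (fun u => deriv (fun s => deriv (fun t =>
        Kcov p (EuclideanSpace.single i s + EuclideanSpace.single j t)
          (EuclideanSpace.single k u + EuclideanSpace.single l u')) 0) 0) 0) 0
        = p * ((p : ℝ) - 1) *
            ((if i = j then (1 : ℝ) else 0) * (if k = l then (1 : ℝ) else 0)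
              + (if i = l then (1 : ℝ) else 0) * (if j = k then (1 : ℝ) else 0)
              + (if i = k then (1 : ℝ) else 0) * (if j = l then (1 : ℝ) else 0))
          + p * (if i = j then (1 : ℝ) else 0) * (if k = l then (1 : ℝ) else 0) := by
  have hess := deriv_deriv_kcov_single_add_single p i j
  refine ⟨deriv_kcov_single_right p x i, deriv_deriv_kcov_right_single_add_single p x i j,
    deriv_deriv_kcov_single_single p i j, ?_, ?_⟩
  · simp_rw [hess]
    exact deriv_kcovHessLeftZero_single p i j k
  · simp_rw [hess]
    exact deriv_deriv_kcovHessLeftZero_single_add_single p i j k l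

/-- Covariances at the origin between the field, its gradient and its Hessian, for a
centered Gaussian field with covariance kernel `K(x,y) = W(x,y)^p`, expressed as partial
derivatives of the kernel. -/
theorem kernel_derivatives (p N : ℕ) (hp : 3 ≤ p) (hN : 2 ≤ N)
    (x : EuclideanSpace ℝ (Fin (N - 1))) (hx : ‖x‖ < 1)
    (i j k l : Fin (N - 1)) :
    deriv (fun t => Kcov p x (EuclideanSpace.single i t)) 0
        = p * Real.sqrt (1 - ‖x‖ ^ 2) ^ (p - 1) * x i ∧
    deriv (fun s => deriv (fun t =>
        Kcov p x (EuclideanSpace.single i t + EuclideanSpace.single j s)) 0) 0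
        = -(if i = j then (1 : ℝ) else 0) * p * Real.sqrt (1 - ‖x‖ ^ 2) ^ p
          + p * ((p : ℝ) - 1) * Real.sqrt (1 - ‖x‖ ^ 2) ^ (p - 2) * (x i * x j) ∧
    deriv (fun s => deriv (fun t =>
        Kcov p (EuclideanSpace.single i s) (EuclideanSpace.single j t)
          : ℝ → ℝ) 0) 0
        = (if i = j then (1 : ℝ) else 0) * p ∧
    deriv (fun u => deriv (fun s => deriv (fun t =>
        Kcov p (EuclideanSpace.single i s + EuclideanSpace.single j t)
          (EuclideanSpace.single k u)) 0) 0) 0 = 0 ∧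
    deriv (fun u' => deriv (fun u => deriv (fun s => deriv (fun t =>
        Kcov p (EuclideanSpace.single i s + EuclideanSpace.single j t)
          (EuclideanSpace.single k u + EuclideanSpace.single l u')) 0) 0) 0) 0
        = p * ((p : ℝ) - 1) *
            ((if i = j then (1 : ℝ) else 0) * (if k = l then (1 : ℝ) else 0)
              + (if i = l then (1 : ℝ) else 0) * (if j = k then (1 : ℝ) else 0)
              + (if i = k then (1 : ℝ) else 0) * (if j = l then (1 : ℝ) else 0))
          + p * (if i = j then (1 : ℝ) else 0) * (if k = l then (1 : ℝ) else 0) :=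
  kernel_derivatives_general p N x i j k l
end
end

section
/- Fix an integer p ≥ 3 and N ≥ 2, a point x in the open unit ball of ℝ^{N−1}, and a unit vector v ∈ ℝ^{N−1}. Then, as t → 0, φ₁²(x, x+tv) = p·( ⟨x,v⟩²/(1−‖x‖²) + 2 − 2(1−‖x‖²)^{(p−1)/2} + 2(p−1)(1−‖x‖²)^{(p−3)/2}·⟨x,v⟩² )·t² + o(t²). -/
open MeasureTheory ProbabilityTheory Filter Topology Asymptotics
open scoped NNReal ENNReal

noncomputable section

open PSpin

/-!
Along the line `y = x + t v` the quantity `φ₁²(x, y)` depends only on `a = 1 - ‖x‖²`,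
`s = ⟨x, v⟩` and `t`. Rationalizing against the conjugate `D = a - ts + √a √(a - 2ts - t²)`
gives `1 - W = t² (s² + a) / D`, so `2 - 2Wᵖ = 2 (1 - W) ∑_{i<p} Wⁱ` is `t²` times a function
continuous at `0`. The remaining terms are `t` times a function differentiable at `0` and
vanishing there, so they are `t²` times its derivative up to `o(t²)`.
-/

open Finset

theorem Filter.Tendsto.isLittleO_sub_mul {α : Type*} {l : Filter α} {R g : α → ℝ} {c : ℝ}
    (h : Tendsto R l (𝓝 c)) : (fun t => (R t - c) * g t) =o[l] g := by
  have h0 : (fun t => R t - c) =o[l] (fun _ => (1 : ℝ)) :=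
    (isLittleO_one_iff ℝ).2 (by simpa using h.sub_const c)
  simpa using h0.mul_isBigO (isBigO_refl g l)

theorem HasDerivAt.isLittleO_mul_sub {h : ℝ → ℝ} {h' : ℝ} (hd : HasDerivAt h h' 0) :
    (fun t => t * (h t - h 0) - h' * t ^ 2) =o[𝓝 0] fun t => t ^ 2 := by
  have := (isBigO_refl (fun t : ℝ => t) (𝓝 0)).mul_isLittleO hd.isLittleO
  exact this.congr (fun t => by simp only [sub_zero, smul_eq_mul]; ring) (fun t => by ring)

namespace PSpin

section

variable {a : ℝ} (s : ℝ)

theorem one_sub_mul_conj (ha : 0 ≤ a) {t : ℝ} (hu : 0 ≤ a - 2 * t * s - t ^ 2) :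
    (1 - (1 - a + t * s + √a * √(a - 2 * t * s - t ^ 2))) *
      (a - t * s + √a * √(a - 2 * t * s - t ^ 2)) = t ^ 2 * (s ^ 2 + a) := by
  have hsq : (√a * √(a - 2 * t * s - t ^ 2)) ^ 2 = a * (a - 2 * t * s - t ^ 2) := by
    rw [mul_pow, Real.sq_sqrt ha, Real.sq_sqrt hu]
  linear_combination -hsq

theorem isLittleO_two_sub_two_pow (p : ℕ) (ha : 0 < a) :
    (fun t => 2 - 2 * (1 - a + t * s + √a * √(a - 2 * t * s - t ^ 2)) ^ p
      - p * (s ^ 2 / a + 1) * t ^ 2) =o[𝓝 0] fun t => t ^ 2 := by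
  set u : ℝ → ℝ := fun t => a - 2 * t * s - t ^ 2
  set W : ℝ → ℝ := fun t => 1 - a + t * s + √a * √(u t)
  set D : ℝ → ℝ := fun t => a - t * s + √a * √(u t)
  have hu0 : u 0 = a := by simp [u]
  have hW0 : W 0 = 1 := by simp [W, hu0, Real.mul_self_sqrt ha.le]
  have hD0 : D 0 = 2 * a := by simp [D, hu0, Real.mul_self_sqrt ha.le]; ring
  have hDc : ContinuousAt D 0 := by fun_prop
  set R : ℝ → ℝ := fun t => 2 * (s ^ 2 + a) / D t * ∑ i ∈ range p, W t ^ i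
  have hR : Tendsto R (𝓝 0) (𝓝 (p * (s ^ 2 / a + 1))) := by
    have hRc : ContinuousAt R 0 :=
      (continuousAt_const.div hDc (by rw [hD0]; positivity)).mul (by fun_prop)
    convert hRc.tendsto using 2
    simp only [R, hW0, hD0, one_pow, sum_const, card_range, nsmul_eq_mul, mul_one]
    field_simp
  have hpos : ∀ᶠ t in 𝓝 (0 : ℝ), 0 < u t ∧ 0 < D t :=
    ((show ContinuousAt u 0 by fun_prop).eventually_const_lt (by rw [hu0]; exact ha)).and
      (hDc.eventually_const_lt (by rw [hD0]; positivity))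
  refine (hR.isLittleO_sub_mul (g := fun t => t ^ 2)).congr' ?_ EventuallyEq.rfl
  filter_upwards [hpos] with t ⟨hut, hDt⟩
  have h1 : t ^ 2 * (s ^ 2 + a) / D t = 1 - W t := by
    rw [div_eq_iff hDt.ne']
    exact (one_sub_mul_conj s ha.le hut.le).symm
  simp only [R]
  linear_combination (2 * ∑ i ∈ range p, W t ^ i) * h1 - 2 * geom_sum_mul (W t) p

theorem isLittleO_mul_rpow_sub (q : ℝ) (ha : 0 < a) :
    (fun t => t * ((a - 2 * t * s - t ^ 2) ^ q * (s + t) - a ^ q * s)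
      - (a ^ q - 2 * q * a ^ (q - 1) * s ^ 2) * t ^ 2) =o[𝓝 0] fun t => t ^ 2 := by
  have hu : HasDerivAt (fun t => a - 2 * t * s - t ^ 2) (-2 * s) 0 :=
    ((((hasDerivAt_id' 0).const_mul 2).mul_const s).const_sub a).sub (hasDerivAt_pow 2 0)
      |>.congr_deriv (by ring)
  have hd : HasDerivAt (fun t => (a - 2 * t * s - t ^ 2) ^ q * (s + t))
      (a ^ q - 2 * q * a ^ (q - 1) * s ^ 2) 0 :=
    ((hu.rpow_const (p := q) (Or.inl (by simpa using ha.ne'))).mul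
      ((hasDerivAt_id' 0).const_add s)).congr_deriv (by norm_num; ring)
  refine hd.isLittleO_mul_sub.congr_left fun t => ?_
  norm_num

end

def phi1Profile (p : ℕ) (a s t : ℝ) : ℝ :=
  2 - 2 * (1 - a + t * s + √a * √(a - 2 * t * s - t ^ 2)) ^ p + p * t ^ 2
    + 2 * p * a ^ (((p : ℝ) - 1) / 2) * (t * s)
    - 2 * p * (a - 2 * t * s - t ^ 2) ^ (((p : ℝ) - 1) / 2) * (t * s + t ^ 2)

theorem isLittleO_phi1Profile (p : ℕ) {a : ℝ} (ha : 0 < a) (s : ℝ) :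
    (fun t => phi1Profile p a s t
      - p * (s ^ 2 / a + 2 - 2 * a ^ (((p : ℝ) - 1) / 2)
        + 2 * ((p : ℝ) - 1) * a ^ (((p : ℝ) - 3) / 2) * s ^ 2) * t ^ 2)
      =o[𝓝 0] fun t => t ^ 2 := by
  have h := (isLittleO_two_sub_two_pow s p ha).sub
    ((isLittleO_mul_rpow_sub s (((p : ℝ) - 1) / 2) ha).const_mul_left (2 * p))
  refine h.congr_left fun t => ?_
  rw [show ((p : ℝ) - 3) / 2 = ((p : ℝ) - 1) / 2 - 1 by ring, phi1Profile]
  ring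

theorem phi1sq_add_smul (p : ℕ) {n : ℕ} (x v : EuclideanSpace ℝ (Fin n)) (hv : ‖v‖ = 1) (t : ℝ) :
    phi1sq p x (x + t • v) = phi1Profile p (1 - ‖x‖ ^ 2) (inner ℝ x v) t := by
  have hdiff : x + t • v - x = t • v := by abel
  have hW : inner ℝ x (x + t • v) = ‖x‖ ^ 2 + t * inner ℝ x v := by
    rw [inner_add_right, real_inner_smul_right, real_inner_self_eq_norm_sq]
  have hnorm : 1 - ‖x + t • v‖ ^ 2 = 1 - ‖x‖ ^ 2 - 2 * t * inner ℝ x v - t ^ 2 := by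
    rw [norm_add_sq_real, real_inner_smul_right, norm_smul, hv, Real.norm_eq_abs, mul_one, sq_abs]
    ring
  have hsub : ‖x - (x + t • v)‖ ^ 2 = t ^ 2 := by
    rw [← norm_neg, neg_sub, hdiff, norm_smul, hv, Real.norm_eq_abs, mul_one, sq_abs]
  have hx : inner ℝ x (x + t • v - x) = t * inner ℝ x v := by
    rw [hdiff, real_inner_smul_right]
  have hy : inner ℝ (x + t • v) (x + t • v - x) = t * inner ℝ x v + t ^ 2 := by
    rw [hdiff, inner_add_left, real_inner_smul_right, real_inner_smul_left, real_inner_smul_right,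
      real_inner_self_eq_norm_sq, hv]
    ring
  rw [phi1sq, Wfun, hW, hnorm, hsub, hx, hy, phi1Profile]
  ring

end PSpin

theorem phi1_taylor_expansion_general (p N : ℕ)
    (x v : EuclideanSpace ℝ (Fin (N - 1))) (hx : ‖x‖ < 1) (hv : ‖v‖ = 1) :
    (fun t : ℝ => phi1sq p x (x + t • v)
        - p * ((inner ℝ x v : ℝ) ^ 2 / (1 - ‖x‖ ^ 2)
            + 2 - 2 * (1 - ‖x‖ ^ 2) ^ (((p : ℝ) - 1) / 2)
            + 2 * ((p : ℝ) - 1) * (1 - ‖x‖ ^ 2) ^ (((p : ℝ) - 3) / 2)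
              * (inner ℝ x v : ℝ) ^ 2) * t ^ 2)
      =o[𝓝 (0 : ℝ)] fun t => t ^ 2 := by
  have ha : 0 < 1 - ‖x‖ ^ 2 := by nlinarith [norm_nonneg x]
  exact (isLittleO_phi1Profile p ha _).congr_left fun t => by rw [phi1sq_add_smul p x v hv]

/-- Second-order Taylor expansion of `φ₁²(x, x + tv)` as `t → 0`. -/
theorem phi1_taylor_expansion (p N : ℕ) (hp : 3 ≤ p) (hN : 2 ≤ N)
    (x v : EuclideanSpace ℝ (Fin (N - 1))) (hx : ‖x‖ < 1) (hv : ‖v‖ = 1) :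
    (fun t : ℝ => phi1sq p x (x + t • v)
        - p * ((inner ℝ x v : ℝ) ^ 2 / (1 - ‖x‖ ^ 2)
            + 2 - 2 * (1 - ‖x‖ ^ 2) ^ (((p : ℝ) - 1) / 2)
            + 2 * ((p : ℝ) - 1) * (1 - ‖x‖ ^ 2) ^ (((p : ℝ) - 3) / 2)
              * (inner ℝ x v : ℝ) ^ 2) * t ^ 2)
      =o[𝓝 (0 : ℝ)] fun t => t ^ 2 :=
  phi1_taylor_expansion_general p N x v hx hv
end
end
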